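/- arXiv:1703.01458 — 2 statements merged into one kernel-verified Lean document; each statement's English description precedes it below -/
import Mathlib

section
/- Let K, L be convex bodies in ℝⁿ with the origin in their interiors and let φ₁, φ₂ : [0,∞) → [0,∞) be continuous, strictly increasing functions with φ₁(1) = 1, φ₁(0) = 0, φ₁(∞) = ∞ (and similarly for φ₂), such that the left derivative (φ₁)'_l(1) exists and is positive. For ε > 0, define f_ε : S^{n-1} → (0,∞) implicitly by φ₁(h_K(u)/f_ε(u)) + ε·φ₂(h_L(u)/f_ε(u)) = 1. Then (φ₁)'_l(1) · lim_{ε→0⁺} (f_ε(u) − h_K(u))/ε = h_K(u) · φ₂(h_L(u)/h_K(u)), and this limit holds uniformly in u ∈ S^{n-1}. -/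
/-!
Write `t = h_K / f_ε`. Since `ε φ₂(h_L / f_ε) = 1 - φ₁(t) > 0`, strict monotonicity of `φ₁` gives
`t < 1`; as `f_ε > h_K` keeps `φ₂(h_L / f_ε) ≤ φ₂(max h_L / min h_K)` bounded, `φ₁(t) → 1` and so
`t → 1⁻`. With `m` the slope of `φ₁` between `t` and `1`, the defining equation reads
`ε φ₂(h_L / f_ε) = m (1 - t)`, hence `d (f_ε - h_K) / ε = (d / m) · f_ε φ₂(h_L / f_ε)`. Here
`m → d` by the left derivative at `1`, and `f_ε φ₂(h_L / f_ε) → h_K φ₂(h_L / h_K)` by uniform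
continuity of `φ₂` on a compact interval. The bounds `0 < min h_K ≤ h_K ≤ max h_K` and
`0 < h_L ≤ max h_L` on the sphere make every step uniform in `u`, which is why all limits are
taken along `𝓝[>] 0 ×ˢ ⊤`.
-/

open MeasureTheory Set Filter
open scoped RealInnerProductSpace

/-- The support function `h_K(u) = sup_{x ∈ K} ⟨x, u⟩` of a set `K ⊆ ℝⁿ`. -/
noncomputable def suppFn (n : ℕ) (K : Set (EuclideanSpace ℝ (Fin n)))
    (u : EuclideanSpace ℝ (Fin n)) : ℝ :=
  sSup ((fun x => (inner ℝ x u : ℝ)) '' K)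

open scoped Topology Uniformity

theorem exists_suppFn_mem_Icc {n : ℕ} {K : Set (EuclideanSpace ℝ (Fin n))} (hK : IsCompact K)
    (h0 : (0 : EuclideanSpace ℝ (Fin n)) ∈ interior K) :
    ∃ r R : ℝ, 0 < r ∧ ∀ u ∈ Metric.sphere (0 : EuclideanSpace ℝ (Fin n)) 1,
      suppFn n K u ∈ Icc r R := by
  obtain ⟨R, hR⟩ := hK.isBounded.exists_norm_le
  obtain ⟨r, hr, hball⟩ := Metric.mem_nhds_iff.1 (mem_interior_iff_mem_nhds.1 h0)
  refine ⟨r / 2, R, half_pos hr, fun u hu => ?_⟩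
  rw [mem_sphere_zero_iff_norm] at hu
  have hle : ∀ x ∈ K, ⟪x, u⟫ ≤ R := fun x hx =>
    (real_inner_le_norm x u).trans (by rw [hu, mul_one]; exact hR x hx)
  have hmem : (r / 2) • u ∈ K := hball (by
    rw [mem_ball_zero_iff, norm_smul, hu, mul_one, Real.norm_eq_abs, abs_of_pos (half_pos hr)]
    exact half_lt_self hr)
  have hval : ⟪(r / 2) • u, u⟫ = r / 2 := by
    rw [real_inner_smul_left, real_inner_self_eq_norm_sq, hu]
    ring
  exact ⟨hval ▸ le_csSup ⟨R, forall_mem_image.2 hle⟩ (mem_image_of_mem _ hmem),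
    csSup_le (image_nonempty.2 ⟨_, hmem⟩) (forall_mem_image.2 hle)⟩

section

variable {ι : Type*} {l : Filter ι}

theorem isBoundedUnder_norm_of_eventually_mem_Icc {g : ι → ℝ} {m M : ℝ}
    (h : ∀ᶠ i in l, g i ∈ Icc m M) : IsBoundedUnder (· ≤ ·) l (norm ∘ g) :=
  isBoundedUnder_of_eventually_le (h.mono fun _ hi => abs_le_max_abs_abs hi.1 hi.2)

theorem UniformContinuousOn.tendsto_sub_comp_sub {φ : ℝ → ℝ} {s : Set ℝ}
    (hφ : UniformContinuousOn φ s) {x y : ι → ℝ} (hx : ∀ᶠ i in l, x i ∈ s)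
    (hy : ∀ᶠ i in l, y i ∈ s) (hxy : Tendsto (fun i => x i - y i) l (𝓝 0)) :
    Tendsto (fun i => φ (x i) - φ (y i)) l (𝓝 0) := by
  have hpair : Tendsto (fun i => (x i, y i)) l (𝓤 ℝ ⊓ 𝓟 (s ×ˢ s)) := by
    refine tendsto_inf.2 ⟨?_, tendsto_principal.2 (hx.and hy)⟩
    rw [tendsto_uniformity_iff_dist_tendsto_zero]
    simpa [Real.dist_eq] using hxy.abs
  have := tendsto_uniformity_iff_dist_tendsto_zero.1 (Tendsto.comp hφ hpair)
  rw [tendsto_zero_iff_abs_tendsto_zero]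
  simpa [Function.comp_def, Real.dist_eq] using this

theorem tendsto_nhdsLT_of_strictMonoOn {φ : ℝ → ℝ} (hφ : StrictMonoOn φ (Ici 0)) {x : ℝ}
    {t : ι → ℝ} (ht : ∀ᶠ i in l, t i ∈ Ico 0 x) (hφt : Tendsto (fun i => φ (t i)) l (𝓝 (φ x))) :
    Tendsto t l (𝓝[<] x) := by
  refine tendsto_nhdsWithin_iff.2 ⟨tendsto_order.2 ⟨fun y hy => ?_, fun y hy => ?_⟩,
    ht.mono fun _ hi => hi.2⟩
  · rcases lt_or_ge y 0 with hy0 | hy0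
    · exact ht.mono fun _ hi => hy0.trans_le hi.1
    filter_upwards [ht, (tendsto_order.1 hφt).1 _ (hφ hy0 (hy0.trans hy.le) hy)] with i hi hφi
    exact (hφ.lt_iff_lt hy0 hi.1).1 hφi
  · exact ht.mono fun _ hi => hi.2.trans hy

theorem tendstoUniformly_of_tendsto_sub {α : Type*} {G : ι → α → ℝ} {g : α → ℝ}
    (h : Tendsto (fun q : ι × α => G q.1 q.2 - g q.2) (l ×ˢ ⊤) (𝓝 0)) :
    TendstoUniformly G g l := by
  rw [tendstoUniformly_iff_tendsto, tendsto_uniformity_iff_dist_tendsto_zero]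
  simpa [Real.dist_eq, abs_sub_comm] using h.abs

theorem div_mem_Icc_div {b B r x : ℝ} (hb : b ∈ Icc 0 B) (hr : 0 < r) (hx : r ≤ x) :
    b / x ∈ Icc 0 (B / r) :=
  ⟨div_nonneg hb.1 (hr.le.trans hx), div_le_div₀ (hb.1.trans hb.2) hb.2 hr hx⟩

variable {φ₁ φ₂ : ℝ → ℝ} {a b F ε : ι → ℝ} {r R B : ℝ}

theorem div_lt_one_of_add_mul_eq_one (h1m : StrictMonoOn φ₁ (Ici 0)) (h11 : φ₁ 1 = 1)
    (h2m : StrictMonoOn φ₂ (Ici 0)) (h20 : φ₂ 0 = 0) {a b F ε : ℝ} (ha : 0 ≤ a) (hb : 0 < b)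
    (hF : 0 < F) (hε : 0 < ε) (h : φ₁ (a / F) + ε * φ₂ (b / F) = 1) : a / F < 1 := by
  have hφ₂ : 0 < φ₂ (b / F) := h20 ▸ h2m (mem_Ici.2 le_rfl) (div_pos hb hF).le (div_pos hb hF)
  refine (h1m.lt_iff_lt (div_nonneg ha hF.le) (mem_Ici.2 zero_le_one)).1 ?_
  linarith [mul_pos hε hφ₂]

theorem tendsto_div_nhdsLT_one (h1m : StrictMonoOn φ₁ (Ici 0)) (h11 : φ₁ 1 = 1)
    (h2m : StrictMonoOn φ₂ (Ici 0)) (h20 : φ₂ 0 = 0) (hr : 0 < r)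
    (ha : ∀ᶠ i in l, r ≤ a i) (hb : ∀ᶠ i in l, b i ∈ Ioc 0 B) (hF : ∀ᶠ i in l, 0 < F i)
    (hε : Tendsto ε l (𝓝[>] 0))
    (heq : ∀ᶠ i in l, φ₁ (a i / F i) + ε i * φ₂ (b i / F i) = 1) :
    Tendsto (fun i => a i / F i) l (𝓝[<] 1) := by
  have hεpos : ∀ᶠ i in l, 0 < ε i := hε self_mem_nhdsWithin
  have ht : ∀ᶠ i in l, a i / F i ∈ Ico 0 1 := by
    filter_upwards [ha, hb, hF, hεpos, heq] with i ha hb hF hε heq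
    have ha : 0 ≤ a i := hr.le.trans ha
    exact ⟨by positivity, div_lt_one_of_add_mul_eq_one h1m h11 h2m h20 ha hb.1 hF hε heq⟩
  have hφ₂ : ∀ᶠ i in l, φ₂ (b i / F i) ∈ Icc 0 (φ₂ (B / r)) := by
    filter_upwards [ha, hb, hF, ht] with i ha hb hF ht
    have hbF := div_mem_Icc_div (Ioc_subset_Icc_self hb) hr (ha.trans ((div_lt_one hF).1 ht.2).le)
    simpa only [h20] using (h2m.monotoneOn.mono Icc_subset_Ici_self).mapsTo_Icc hbF
  have hsmall : Tendsto (fun i => ε i * φ₂ (b i / F i)) l (𝓝 0) :=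
    (hε.mono_right nhdsWithin_le_nhds).zero_mul_isBoundedUnder_le
      (isBoundedUnder_norm_of_eventually_mem_Icc hφ₂)
  refine tendsto_nhdsLT_of_strictMonoOn h1m ht ?_
  rw [h11]
  have h1 : Tendsto (fun i => 1 - ε i * φ₂ (b i / F i)) l (𝓝 1) := by
    simpa using hsmall.const_sub 1
  refine h1.congr' ?_
  filter_upwards [heq] with i heq
  linarith

theorem tendsto_mul_comp_div_sub_mul_comp_div (h2c : ContinuousOn φ₂ (Ici 0)) (hr : 0 < r)
    (ha : ∀ᶠ i in l, a i ∈ Icc r R) (hb : ∀ᶠ i in l, b i ∈ Icc 0 B) (hF : ∀ᶠ i in l, 0 < F i)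
    (ht : Tendsto (fun i => a i / F i) l (𝓝[<] 1)) :
    Tendsto (fun i => F i * φ₂ (b i / F i) - a i * φ₂ (b i / a i)) l (𝓝 0) := by
  have hbF : ∀ᶠ i in l, b i / F i ∈ Icc 0 (B / r) ∧ b i / a i ∈ Icc 0 (B / r) := by
    filter_upwards [ha, hb, hF, ht self_mem_nhdsWithin] with i ha hb hF ht
    exact ⟨div_mem_Icc_div hb hr (ha.1.trans ((div_lt_one hF).1 ht).le),
      div_mem_Icc_div hb hr ha.1⟩
  obtain ⟨C, hC⟩ := isCompact_Icc.exists_bound_of_continuousOn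
    (h2c.mono (Icc_subset_Ici_self : Icc 0 (B / r) ⊆ Ici 0))
  have ht' : Tendsto (fun i => a i / F i) l (𝓝 1) := ht.mono_right nhdsWithin_le_nhds
  have hFa : Tendsto (fun i => F i - a i) l (𝓝 0) := by
    have h := isBoundedUnder_le_mul_tendsto_zero (isBoundedUnder_norm_of_eventually_mem_Icc ha)
      (by simpa using (ht'.inv₀ one_ne_zero).sub_const 1)
    refine h.congr' ?_
    filter_upwards [ha, hF] with i ha hF
    have : a i ≠ 0 := (hr.trans_le ha.1).ne'
    field_simp
  have hdiff : Tendsto (fun i => φ₂ (b i / F i) - φ₂ (b i / a i)) l (𝓝 0) := by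
    refine (isCompact_Icc.uniformContinuousOn_of_continuous
      (h2c.mono Icc_subset_Ici_self)).tendsto_sub_comp_sub
      (hbF.mono fun _ h => h.1) (hbF.mono fun _ h => h.2) ?_
    have h := isBoundedUnder_le_mul_tendsto_zero
      (isBoundedUnder_norm_of_eventually_mem_Icc (hbF.mono fun _ h => h.2))
      (by simpa using ht'.sub_const 1)
    refine h.congr' ?_
    filter_upwards [ha, hF] with i ha hF
    have : a i ≠ 0 := (hr.trans_le ha.1).ne'
    field_simp
  have hφ₂ : IsBoundedUnder (· ≤ ·) l (norm ∘ fun i => φ₂ (b i / F i)) :=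
    isBoundedUnder_of_eventually_le (hbF.mono fun _ h => hC _ h.1)
  have := (hFa.zero_mul_isBoundedUnder_le hφ₂).add
    (isBoundedUnder_le_mul_tendsto_zero (isBoundedUnder_norm_of_eventually_mem_Icc ha) hdiff)
  simp only [add_zero] at this
  refine this.congr fun i => ?_
  ring

theorem mul_sub_div_eq_div_slope_mul (h11 : φ₁ 1 = 1) {a F ε y d : ℝ} (hF : F ≠ 0) (hε : ε ≠ 0)
    (hy : y ≠ 0) (haF : a ≠ F) (h : φ₁ (a / F) + ε * y = 1) :
    d * ((F - a) / ε) = d / slope φ₁ 1 (a / F) * (F * y) := by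
  have hFa : F - a ≠ 0 := sub_ne_zero.2 haF.symm
  have hslope : slope φ₁ 1 (a / F) = ε * y * F / (F - a) := by
    rw [slope_def_field, h11, show φ₁ (a / F) - 1 = -(ε * y) by linarith]
    field_simp
    ring
  rw [hslope]
  field_simp

theorem tendsto_mul_sub_div_sub_mul_comp_div {d : ℝ} (hd : d ≠ 0)
    (h1m : StrictMonoOn φ₁ (Ici 0)) (h11 : φ₁ 1 = 1) (hderiv : HasDerivWithinAt φ₁ d (Iic 1) 1)
    (h2c : ContinuousOn φ₂ (Ici 0)) (h2m : StrictMonoOn φ₂ (Ici 0)) (h20 : φ₂ 0 = 0)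
    (hr : 0 < r) (ha : ∀ᶠ i in l, a i ∈ Icc r R) (hb : ∀ᶠ i in l, b i ∈ Ioc 0 B)
    (hF : ∀ᶠ i in l, 0 < F i) (hε : Tendsto ε l (𝓝[>] 0))
    (heq : ∀ᶠ i in l, φ₁ (a i / F i) + ε i * φ₂ (b i / F i) = 1) :
    Tendsto (fun i => d * ((F i - a i) / ε i) - a i * φ₂ (b i / a i)) l (𝓝 0) := by
  have ht := tendsto_div_nhdsLT_one h1m h11 h2m h20 hr (ha.mono fun _ h => h.1) hb hF hε heq
  have hX := tendsto_mul_comp_div_sub_mul_comp_div h2c hr ha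
    (hb.mono fun _ h => Ioc_subset_Icc_self h) hF ht
  have hslope : Tendsto (fun i => d / slope φ₁ 1 (a i / F i)) l (𝓝 1) := by
    have h := hasDerivWithinAt_iff_tendsto_slope.1 hderiv
    rw [Iic_sdiff_right] at h
    have h' := (tendsto_const_nhds (x := d)).div (h.comp ht) hd
    rwa [div_self hd] at h'
  have hY : ∀ᶠ i in l, a i * φ₂ (b i / a i) ∈ Icc 0 (R * φ₂ (B / r)) := by
    filter_upwards [ha, hb] with i ha hb
    have hφ₂ : φ₂ (b i / a i) ∈ Icc 0 (φ₂ (B / r)) := by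
      simpa only [h20] using (h2m.monotoneOn.mono Icc_subset_Ici_self).mapsTo_Icc
        (div_mem_Icc_div (Ioc_subset_Icc_self hb) hr ha.1)
    exact ⟨mul_nonneg (hr.le.trans ha.1) hφ₂.1,
      mul_le_mul ha.2 hφ₂.2 hφ₂.1 (hr.le.trans (ha.1.trans ha.2))⟩
  have hquot : ∀ᶠ i in l, d * ((F i - a i) / ε i) =
      d / slope φ₁ 1 (a i / F i) * (F i * φ₂ (b i / F i)) := by
    filter_upwards [hb, hF, hε self_mem_nhdsWithin, heq, ht self_mem_nhdsWithin]
      with i hb hF hε heq ht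
    have hφ₂ : 0 < φ₂ (b i / F i) :=
      h20 ▸ h2m (mem_Ici.2 le_rfl) (div_pos hb.1 hF).le (div_pos hb.1 hF)
    exact mul_sub_div_eq_div_slope_mul h11 hF.ne' (ne_of_gt hε) hφ₂.ne'
      ((div_lt_one hF).1 ht).ne heq
  have hslope' : Tendsto (fun i => d / slope φ₁ 1 (a i / F i) - 1) l (𝓝 0) := by
    simpa using hslope.sub_const 1
  have h := (hslope.mul hX).add
    (hslope'.zero_mul_isBoundedUnder_le (isBoundedUnder_norm_of_eventually_mem_Icc hY))
  simp only [mul_zero, add_zero] at h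
  refine h.congr' ?_
  filter_upwards [hquot] with i hquot
  rw [hquot]
  ring

end

theorem orlicz_linear_addition_variational_general (n : ℕ)
    (K L : Set (EuclideanSpace ℝ (Fin n)))
    (hKcomp : IsCompact K)
    (h0K : (0 : EuclideanSpace ℝ (Fin n)) ∈ interior K)
    (hLcomp : IsCompact L)
    (h0L : (0 : EuclideanSpace ℝ (Fin n)) ∈ interior L)
    (φ₁ φ₂ : ℝ → ℝ)
    (h1m : StrictMonoOn φ₁ (Ici 0))
    (h11 : φ₁ 1 = 1)
    (h2c : ContinuousOn φ₂ (Ici 0)) (h2m : StrictMonoOn φ₂ (Ici 0))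
    (h20 : φ₂ 0 = 0)
    (d : ℝ) (hd : 0 < d) (hderiv : HasDerivWithinAt φ₁ d (Iic 1) 1)
    (f : ℝ → Metric.sphere (0 : EuclideanSpace ℝ (Fin n)) 1 → ℝ)
    (hfpos : ∀ ε > 0, ∀ u, 0 < f ε u)
    (hfdef : ∀ ε > 0, ∀ u : Metric.sphere (0 : EuclideanSpace ℝ (Fin n)) 1,
      φ₁ (suppFn n K ↑u / f ε u) + ε * φ₂ (suppFn n L ↑u / f ε u) = 1) :
    TendstoUniformly (fun ε u => d * ((f ε u - suppFn n K ↑u) / ε))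
      (fun u => suppFn n K ↑u * φ₂ (suppFn n L ↑u / suppFn n K ↑u))
      (nhdsWithin 0 (Ioi 0)) := by
  obtain ⟨r, R, hr, hK⟩ := exists_suppFn_mem_Icc hKcomp h0K
  obtain ⟨r', B, hr', hL⟩ := exists_suppFn_mem_Icc hLcomp h0L
  have hpos : ∀ᶠ q : ℝ × Metric.sphere (0 : EuclideanSpace ℝ (Fin n)) 1 in 𝓝[>] 0 ×ˢ ⊤,
      0 < q.1 := tendsto_fst self_mem_nhdsWithin
  exact tendstoUniformly_of_tendsto_sub <| tendsto_mul_sub_div_sub_mul_comp_div hd.ne' h1m h11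
    hderiv h2c h2m h20 hr (.of_forall fun q => hK q.2 q.2.2)
    (.of_forall fun q => ⟨hr'.trans_le (hL q.2 q.2.2).1, (hL q.2 q.2.2).2⟩)
    (hpos.mono fun q hq => hfpos q.1 hq q.2) tendsto_fst (hpos.mono fun q hq => hfdef q.1 hq q.2)

/-- for convex bodies `K, L` with `0` in their interiors and Orlicz functions
`φ₁, φ₂ ∈ 𝓘` with positive left derivative `(φ₁)'_l(1) = d`, the functions `f_ε` defined by
`φ₁(h_K/f_ε) + ε φ₂(h_L/f_ε) = 1` satisfy
`(φ₁)'_l(1) · (f_ε − h_K)/ε → h_K · φ₂(h_L/h_K)` uniformly on `S^{n-1}` as `ε → 0⁺`. -/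
theorem orlicz_linear_addition_variational (n : ℕ)
    (K L : Set (EuclideanSpace ℝ (Fin n)))
    (hKconv : Convex ℝ K) (hKcomp : IsCompact K)
    (h0K : (0 : EuclideanSpace ℝ (Fin n)) ∈ interior K)
    (hLconv : Convex ℝ L) (hLcomp : IsCompact L)
    (h0L : (0 : EuclideanSpace ℝ (Fin n)) ∈ interior L)
    (φ₁ φ₂ : ℝ → ℝ)
    (h1c : ContinuousOn φ₁ (Ici 0)) (h1m : StrictMonoOn φ₁ (Ici 0))
    (h10 : φ₁ 0 = 0) (h11 : φ₁ 1 = 1) (h1t : Tendsto φ₁ atTop atTop)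
    (h2c : ContinuousOn φ₂ (Ici 0)) (h2m : StrictMonoOn φ₂ (Ici 0))
    (h20 : φ₂ 0 = 0) (h21 : φ₂ 1 = 1) (h2t : Tendsto φ₂ atTop atTop)
    (d : ℝ) (hd : 0 < d) (hderiv : HasDerivWithinAt φ₁ d (Iic 1) 1)
    (f : ℝ → Metric.sphere (0 : EuclideanSpace ℝ (Fin n)) 1 → ℝ)
    (hfpos : ∀ ε > 0, ∀ u, 0 < f ε u)
    (hfdef : ∀ ε > 0, ∀ u : Metric.sphere (0 : EuclideanSpace ℝ (Fin n)) 1,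
      φ₁ (suppFn n K ↑u / f ε u) + ε * φ₂ (suppFn n L ↑u / f ε u) = 1) :
    TendstoUniformly (fun ε u => d * ((f ε u - suppFn n K ↑u) / ε))
      (fun u => suppFn n K ↑u * φ₂ (suppFn n L ↑u / suppFn n K ↑u))
      (nhdsWithin 0 (Ioi 0)) :=
  orlicz_linear_addition_variational_general n K L hKcomp h0K hLcomp h0L φ₁ φ₂ h1m h11 h2c h2m h20 d
    hd hderiv f hfpos hfdef
end

section
/- Let Ω, Ω₁ be bounded convex domains in ℝⁿ containing the origin, 1 < p < n, and φ : [0,∞) → [0,∞) increasing and convex. Then the Orlicz L_φ mixed p-capacity satisfies C_{p,φ}(Ω, Ω₁) ≥ C_p(Ω) · φ((C_p(Ω₁)/C_p(Ω))^{1/(n-p)}). -/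
/-!
Jensen's inequality is used only in its elementary form, a supporting line. Put
`a = (C_p(Ω₁)/C_p(Ω))^{1/(n-p)}` and let `s` be the right derivative of `φ` at `a`; then
`φ t ≥ φ a + s (t - a)` for `t ≥ 0`, and `s ≥ 0` because `φ` is increasing. Taking
`t = h_{Ω₁}/h_Ω`, multiplying by `h_Ω` and integrating against `μ_p`, the Poincaré formula gives
`C_{p,φ}(Ω, Ω₁) ≥ φ(a) C_p(Ω) + s (C_p(Ω, Ω₁) - a C_p(Ω))`, and the `p`-capacitary Minkowski
inequality says precisely that `C_p(Ω, Ω₁) ≥ a C_p(Ω)`.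
-/

open MeasureTheory Set

/-- A bounded open convex domain containing the origin. -/
def IsConvexDomain (n : ℕ) (Ω : Set (EuclideanSpace ℝ (Fin n))) : Prop :=
  IsOpen Ω ∧ Convex ℝ Ω ∧ Bornology.IsBounded Ω ∧ (0 : EuclideanSpace ℝ (Fin n)) ∈ Ω

open Filter Topology Bornology

lemma ConvexOn.add_rightDeriv_mul_sub_le {S : Set ℝ} {f : ℝ → ℝ} (hf : ConvexOn ℝ S f)
    {x y : ℝ} (hx : x ∈ interior S) (hy : y ∈ S) :
    f x + derivWithin f (Ioi x) x * (y - x) ≤ f y := by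
  rcases lt_trichotomy y x with hyx | rfl | hxy
  · have h := (hf.slope_le_leftDeriv_of_mem_interior hy hx hyx).trans
      (hf.leftDeriv_le_rightDeriv_of_mem_interior hx)
    rw [slope_def_field, div_le_iff₀ (sub_pos.2 hyx)] at h
    linarith
  · simp
  · have h := hf.rightDeriv_le_slope_of_mem_interior hx hy hxy
    rw [slope_def_field, le_div_iff₀ (sub_pos.2 hxy)] at h
    linarith

section Orlicz

variable {α : Type*} [MeasurableSpace α] {μ : Measure α}

theorem mul_integral_le_integral_comp_div_mul {φ : ℝ → ℝ} (hφm : MonotoneOn φ (Ici 0))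
    (hφc : ConvexOn ℝ (Ici 0) φ) {f g : α → ℝ} (hf : Integrable f μ) (hg : Integrable g μ)
    (hφfg : Integrable (fun u => φ (f u / g u) * g u) μ) (hf0 : ∀ u, 0 ≤ f u)
    (hg0 : ∀ u, 0 < g u) {a : ℝ} (ha : 0 < a) (hfg : a * ∫ u, g u ∂μ ≤ ∫ u, f u ∂μ) :
    φ a * ∫ u, g u ∂μ ≤ ∫ u, φ (f u / g u) * g u ∂μ := by
  have ha' : a ∈ interior (Ici 0) := by rwa [interior_Ici]
  set s := derivWithin φ (Ioi a) a
  have hs : 0 ≤ s := (hφm.mono (Ioi_subset_Ici ha.le)).derivWithin_nonneg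
  have hsupport : ∀ u, (φ a - s * a) * g u + s * f u ≤ φ (f u / g u) * g u := by
    intro u
    have h := hφc.add_rightDeriv_mul_sub_le ha' (div_nonneg (hf0 u) (hg0 u).le)
    have h' := mul_le_mul_of_nonneg_right h (hg0 u).le
    rw [add_mul, mul_assoc, sub_mul, div_mul_cancel₀ _ (hg0 u).ne'] at h'
    linarith
  calc φ a * ∫ u, g u ∂μ ≤ φ a * ∫ u, g u ∂μ + s * (∫ u, f u ∂μ - a * ∫ u, g u ∂μ) :=
        le_add_of_nonneg_right (mul_nonneg hs (sub_nonneg.2 hfg))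
    _ = ∫ u, (φ a - s * a) * g u + s * f u ∂μ := by
        rw [integral_add (hg.const_mul _) (hf.const_mul _), integral_const_mul,
          integral_const_mul]
        ring
    _ ≤ ∫ u, φ (f u / g u) * g u ∂μ :=
        integral_mono ((hg.const_mul _).add (hf.const_mul _)) hφfg hsupport

end Orlicz

lemma mul_div_rpow_one_div_le_of_le_rpow {d C C₁ X : ℝ} (hd : 0 < d) (hC : 0 < C)
    (hC₁ : 0 ≤ C₁) (hX : 0 ≤ X) (h : C ^ (d - 1) * C₁ ≤ X ^ d) :
    (C₁ / C) ^ (1 / d) * C ≤ X := by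
  have key : (C ^ (d - 1) * C₁) ^ (1 / d) = (C₁ / C) ^ (1 / d) * C := by
    rw [Real.mul_rpow (Real.rpow_nonneg hC.le _) hC₁, ← Real.rpow_mul hC.le,
      Real.div_rpow hC₁ hC.le, sub_mul, mul_one_div_cancel hd.ne', one_mul,
      Real.rpow_sub hC, Real.rpow_one]
    field_simp
  calc (C₁ / C) ^ (1 / d) * C = (C ^ (d - 1) * C₁) ^ (1 / d) := key.symm
    _ ≤ (X ^ d) ^ (1 / d) :=
        Real.rpow_le_rpow (mul_nonneg (Real.rpow_nonneg hC.le _) hC₁) h (by positivity)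
    _ = X := by rw [← Real.rpow_mul hX, mul_one_div_cancel hd.ne', Real.rpow_one]

section SupportFunction

variable {n : ℕ} {K : Set (EuclideanSpace ℝ (Fin n))}

lemma bddAbove_image_inner_of_norm_le {R : ℝ} (hR : ∀ x ∈ K, ‖x‖ ≤ R)
    (u : EuclideanSpace ℝ (Fin n)) : BddAbove ((fun x => (inner ℝ x u : ℝ)) '' K) := by
  refine ⟨R * ‖u‖, ?_⟩
  rintro _ ⟨x, hx, rfl⟩
  exact (real_inner_le_norm x u).trans (mul_le_mul_of_nonneg_right (hR x hx) (norm_nonneg u))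

lemma lipschitzWith_suppFn {R : ℝ} (hne : K.Nonempty) (hR : ∀ x ∈ K, ‖x‖ ≤ R) :
    LipschitzWith R.toNNReal (suppFn n K) := by
  refine LipschitzWith.of_le_add_mul _ fun u v => csSup_le (hne.image _) ?_
  rintro _ ⟨x, hx, rfl⟩
  have hv : inner ℝ x v ≤ suppFn n K v :=
    le_csSup (bddAbove_image_inner_of_norm_le hR v) (mem_image_of_mem _ hx)
  have huv : inner ℝ x (u - v) ≤ R.toNNReal * dist u v :=
    calc inner ℝ x (u - v) ≤ ‖x‖ * ‖u - v‖ := real_inner_le_norm x (u - v)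
      _ ≤ R.toNNReal * ‖u - v‖ :=
        mul_le_mul_of_nonneg_right ((hR x hx).trans (Real.le_coe_toNNReal R)) (norm_nonneg _)
      _ = R.toNNReal * dist u v := by rw [dist_eq_norm]
  have hsplit : inner ℝ x u = inner ℝ x v + inner ℝ x (u - v) := by
    rw [← inner_add_right, add_sub_cancel]
  linarith

lemma continuous_suppFn (hK : IsBounded K) (hne : K.Nonempty) : Continuous (suppFn n K) :=
  let ⟨_, hR⟩ := hK.exists_norm_le
  (lipschitzWith_suppFn hne hR).continuous

lemma suppFn_pos (hK : IsBounded K) (h0 : K ∈ 𝓝 0) {u : EuclideanSpace ℝ (Fin n)}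
    (hu : u ≠ 0) : 0 < suppFn n K u := by
  obtain ⟨R, hR⟩ := hK.exists_norm_le
  have hlim : Tendsto (fun t : ℝ => t • u) (𝓝[>] 0) (𝓝 0) := by
    simpa using (tendsto_id.smul_const u).mono_left (nhdsWithin_le_nhds (a := (0 : ℝ)))
  obtain ⟨t, htK, ht⟩ := ((hlim.eventually h0).and self_mem_nhdsWithin).exists
  have ht : (0 : ℝ) < t := ht
  calc 0 < t * ‖u‖ ^ 2 := by positivity
    _ = inner ℝ (t • u) u := by rw [real_inner_smul_left, real_inner_self_eq_norm_sq]
    _ ≤ suppFn n K u := le_csSup (bddAbove_image_inner_of_norm_le hR u) (mem_image_of_mem _ htK)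

lemma IsConvexDomain.suppFn_pos (hK : IsConvexDomain n K) {u : EuclideanSpace ℝ (Fin n)}
    (hu : u ≠ 0) : 0 < suppFn n K u :=
  _root_.suppFn_pos hK.2.2.1 (hK.1.mem_nhds hK.2.2.2) hu

lemma IsConvexDomain.continuous_suppFn (hK : IsConvexDomain n K) : Continuous (suppFn n K) :=
  _root_.continuous_suppFn hK.2.2.1 ⟨0, hK.2.2.2⟩

lemma IsConvexDomain.integrable_suppFn (hK : IsConvexDomain n K)
    (μ : Measure (Metric.sphere (0 : EuclideanSpace ℝ (Fin n)) 1)) [IsFiniteMeasure μ] :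
    Integrable (fun u : Metric.sphere (0 : EuclideanSpace ℝ (Fin n)) 1 => suppFn n K u) μ :=
  (hK.continuous_suppFn.comp continuous_subtype_val).integrable_of_hasCompactSupport
    (.of_compactSpace _)

lemma IsConvexDomain.integrable_comp_div_suppFn_mul_suppFn {L : Set (EuclideanSpace ℝ (Fin n))}
    (hK : IsConvexDomain n K) (hL : IsConvexDomain n L) {φ : ℝ → ℝ}
    (hφ : ContinuousOn φ (Ioi 0))
    (μ : Measure (Metric.sphere (0 : EuclideanSpace ℝ (Fin n)) 1)) [IsFiniteMeasure μ] :
    Integrable (fun u : Metric.sphere (0 : EuclideanSpace ℝ (Fin n)) 1 =>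
      φ (suppFn n L u / suppFn n K u) * suppFn n K u) μ := by
  have hposK (u : Metric.sphere (0 : EuclideanSpace ℝ (Fin n)) 1) : 0 < suppFn n K u :=
    hK.suppFn_pos (ne_zero_of_mem_unit_sphere u)
  have hK' : Continuous fun u : Metric.sphere (0 : EuclideanSpace ℝ (Fin n)) 1 => suppFn n K u :=
    hK.continuous_suppFn.comp continuous_subtype_val
  have hL' : Continuous fun u : Metric.sphere (0 : EuclideanSpace ℝ (Fin n)) 1 => suppFn n L u :=
    hL.continuous_suppFn.comp continuous_subtype_val
  refine Continuous.integrable_of_hasCompactSupport ?_ (.of_compactSpace _)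
  exact (hφ.comp_continuous (hL'.div hK' fun u => (hposK u).ne') fun u =>
    div_pos (hL.suppFn_pos (ne_zero_of_mem_unit_sphere u)) (hposK u)).mul hK'

end SupportFunction

/-- the `p`-capacitary Orlicz–Minkowski inequality
`C_{p,φ}(Ω,Ω₁) ≥ C_p(Ω) · φ((C_p(Ω₁)/C_p(Ω))^{1/(n-p)})`, where `μp` is the `p`-capacitary
measure of `Ω`, `Cp = C_p(Ω)` and `Cp1 = C_p(Ω₁)` are linked by the Poincaré `p`-capacity
formula and the `p`-capacitary Minkowski inequality. -/
theorem orlicz_minkowski_capacity (n : ℕ) (p : ℝ) (hp : 1 < p) (hpn : p < n)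
    (Ω Ω₁ : Set (EuclideanSpace ℝ (Fin n)))
    (hΩ : IsConvexDomain n Ω) (hΩ₁ : IsConvexDomain n Ω₁)
    (φ : ℝ → ℝ) (hφm : MonotoneOn φ (Ici 0)) (hφc : ConvexOn ℝ (Ici 0) φ)
    (μp : Measure (Metric.sphere (0 : EuclideanSpace ℝ (Fin n)) 1)) [IsFiniteMeasure μp]
    (Cp Cp1 : ℝ) (hCp : 0 < Cp) (hCp1 : 0 < Cp1)
    (hPoincare : (p - 1) / ((n : ℝ) - p) * ∫ u, suppFn n Ω ↑u ∂μp = Cp)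
    (hMinkowski : ((p - 1) / ((n : ℝ) - p) * ∫ u, suppFn n Ω₁ ↑u ∂μp) ^ ((n : ℝ) - p)
      ≥ Cp ^ ((n : ℝ) - p - 1) * Cp1) :
    (p - 1) / ((n : ℝ) - p) * ∫ u, φ (suppFn n Ω₁ ↑u / suppFn n Ω ↑u) * suppFn n Ω ↑u ∂μp
      ≥ Cp * φ ((Cp1 / Cp) ^ (1 / ((n : ℝ) - p))) := by
  set k := (p - 1) / ((n : ℝ) - p)
  set a := (Cp1 / Cp) ^ (1 / ((n : ℝ) - p))
  have hd : 0 < (n : ℝ) - p := sub_pos.2 hpn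
  have hk : 0 < k := div_pos (sub_pos.2 hp) hd
  have hpos {K} (hK : IsConvexDomain n K) (u : Metric.sphere (0 : EuclideanSpace ℝ (Fin n)) 1) :
      0 < suppFn n K u := hK.suppFn_pos (ne_zero_of_mem_unit_sphere u)
  have hfg : a * ∫ u, suppFn n Ω u ∂μp ≤ ∫ u, suppFn n Ω₁ u ∂μp := by
    have hX : 0 ≤ k * ∫ u, suppFn n Ω₁ u ∂μp :=
      mul_nonneg hk.le (integral_nonneg fun u => (hpos hΩ₁ u).le)
    have h : a * Cp ≤ k * ∫ u, suppFn n Ω₁ u ∂μp :=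
      mul_div_rpow_one_div_le_of_le_rpow hd hCp hCp1.le hX hMinkowski
    rw [← hPoincare, mul_left_comm] at h
    exact le_of_mul_le_mul_left h hk
  have hφ : ContinuousOn φ (Ioi 0) := by simpa using hφc.continuousOn_interior
  have hbound := mul_integral_le_integral_comp_div_mul hφm hφc (hΩ₁.integrable_suppFn μp)
    (hΩ.integrable_suppFn μp) (hΩ.integrable_comp_div_suppFn_mul_suppFn hΩ₁ hφ μp)
    (fun u => (hpos hΩ₁ u).le) (hpos hΩ) (by positivity) hfg
  rw [ge_iff_le, ← hPoincare, mul_comm, mul_left_comm]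
  exact mul_le_mul_of_nonneg_left hbound hk.le
end
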